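/- Let A ∈ ℝ^{n×n}, C ∈ ℝ^{p̂×n}, τ_s > 0, let η ≥ 1 be an integer, and let W ∈ ℝ^{(η p̂)×n} be the matrix obtained by stacking C, C e^{Aτ_s}, …, C e^{A(η−1)τ_s}. Suppose W has a left inverse W† (i.e., W† W = I_n). Let N > 0, E ≥ 0, and e₀ ∈ ℝ^n with |e₀|_∞ ≤ E, and for i = 0, …, η−1 let y_i = C e^{A i τ_s} e₀ and let q_i ∈ ℝ^{p̂} satisfy |q_i − y_i|_∞ ≤ ‖C e^{A i τ_s}‖_∞ · E / N. Let q ∈ ℝ^{η p̂} be the stacking of q₀, …, q_{η−1}. Then | e^{A η τ_s} ( e₀ − W† q ) |_∞ ≤ ( ‖ e^{A η τ_s} W† ‖_∞ · max_{0 ≤ i ≤ η−1} ‖C e^{A i τ_s}‖_∞ / N ) · E. -/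

import Mathlib

open scoped Matrix

/-- The induced maximum-norm of a real matrix:
`‖M‖_∞ = sup {|Mv|_∞ : |v|_∞ = 1}`, where the norm on vectors is the sup norm. -/
noncomputable def opInfNorm {m : Type*} {n : Type*} [Fintype m] [Fintype n]
    (M : Matrix m n ℝ) : ℝ :=
  sSup {c : ℝ | ∃ v : n → ℝ, ‖v‖ = 1 ∧ c = ‖M.mulVec v‖}

/-! The quantization error `W e₀ - q` is bounded blockwise by `‖Ce^{Aiτs}‖_∞ E / N`, hence by
`max_i ‖Ce^{Aiτs}‖_∞ E / N` in the sup norm, and the left inverse turns the update error into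
`e₀ - W† q = W† (W e₀ - q)`; propagating it by `e^{Aητs}` costs the factor `‖e^{Aητs} W†‖_∞`. -/

section OpInfNorm

variable {m n : Type*} [Fintype m] [Fintype n]

lemma opInfNorm_nonneg (M : Matrix m n ℝ) : 0 ≤ opInfNorm M :=
  Real.sSup_nonneg <| by
    rintro c ⟨v, -, rfl⟩
    exact norm_nonneg _

lemma bddAbove_norm_mulVec_unit (M : Matrix m n ℝ) :
    BddAbove {c : ℝ | ∃ v : n → ℝ, ‖v‖ = 1 ∧ c = ‖M.mulVec v‖} := by
  let := Matrix.linftyOpNormedAddCommGroup (m := m) (n := n) (α := ℝ)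
  refine ⟨‖M‖, ?_⟩
  rintro c ⟨v, hv, rfl⟩
  simpa [hv] using Matrix.linfty_opNorm_mulVec M v

lemma norm_mulVec_le_opInfNorm_mul (M : Matrix m n ℝ) (v : n → ℝ) :
    ‖M.mulVec v‖ ≤ opInfNorm M * ‖v‖ := by
  rcases eq_or_ne v 0 with rfl | hv
  · simp
  have hv_pos : 0 < ‖v‖ := norm_pos_iff.mpr hv
  have h_unit : ‖‖v‖⁻¹ • v‖ = 1 := by
    rw [norm_smul, norm_inv, norm_norm, inv_mul_cancel₀ hv_pos.ne']
  have h_le : ‖M.mulVec (‖v‖⁻¹ • v)‖ ≤ opInfNorm M :=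
    le_csSup (bddAbove_norm_mulVec_unit M) ⟨_, h_unit, rfl⟩
  calc ‖M.mulVec v‖ = ‖v‖ * ‖M.mulVec (‖v‖⁻¹ • v)‖ := by
        rw [Matrix.mulVec_smul, norm_smul, norm_inv, norm_norm, ← mul_assoc,
          mul_inv_cancel₀ hv_pos.ne', one_mul]
    _ ≤ ‖v‖ * opInfNorm M := by gcongr
    _ = opInfNorm M * ‖v‖ := mul_comm _ _

end OpInfNorm

lemma norm_uncurry_le_of_forall_norm_le {ι κ : Type*} [Fintype ι] [Fintype κ]
    {f : ι → κ → ℝ} {r : ℝ} (hr : 0 ≤ r) (hf : ∀ i, ‖f i‖ ≤ r) :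
    ‖fun ij : ι × κ => f ij.1 ij.2‖ ≤ r :=
  (pi_norm_le_iff_of_nonneg hr).mpr fun ij => (norm_le_pi_norm (f ij.1) ij.2).trans (hf ij.1)

namespace Matrix

variable {R ι κ n : Type*} [CommRing R] [Fintype n]

lemma mulVec_eq_of_stacked {W : Matrix (ι × κ) n R} {B : ι → Matrix κ n R}
    (hW : ∀ i j l, W (i, j) l = B i j l) (v : n → R) :
    W *ᵥ v = fun ij => (B ij.1 *ᵥ v) ij.2 := by
  ext ⟨i, j⟩
  simp only [mulVec, dotProduct, hW]

lemma sub_mulVec_eq_mulVec_sub_of_mul_eq_one [Fintype ι] [DecidableEq n] {W : Matrix ι n R} {Wd : Matrix n ι R}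
    (hWd : Wd * W = 1) (e : n → R) (q : ι → R) :
    e - Wd *ᵥ q = Wd *ᵥ (W *ᵥ e - q) := by
  rw [mulVec_sub, mulVec_mulVec, hWd, one_mulVec]

end Matrix

theorem stmt_15_general (n pd ηq : ℕ)
    (A : Matrix (Fin n) (Fin n) ℝ) (C : Matrix (Fin pd) (Fin n) ℝ)
    (τs : ℝ)
    (W : Matrix (Fin ηq × Fin pd) (Fin n) ℝ)
    (hW : ∀ (i : Fin ηq) (j : Fin pd) (l : Fin n),
      W (i, j) l = (C * NormedSpace.exp (((i : ℕ) * τs) • A)) j l)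
    (Wd : Matrix (Fin n) (Fin ηq × Fin pd) ℝ) (hWd : Wd * W = 1)
    (N E : ℝ) (hN : 0 < N) (hE : 0 ≤ E)
    (e₀ : Fin n → ℝ)
    (q : Fin ηq → Fin pd → ℝ)
    (hq : ∀ i : Fin ηq,
      ‖q i - (C * NormedSpace.exp (((i : ℕ) * τs) • A)).mulVec e₀‖ ≤
        opInfNorm (C * NormedSpace.exp (((i : ℕ) * τs) • A)) * E / N) :
    ‖(NormedSpace.exp (((ηq : ℝ) * τs) • A)).mulVec
        (e₀ - Wd.mulVec (fun ij => q ij.1 ij.2))‖ ≤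
      opInfNorm (NormedSpace.exp (((ηq : ℝ) * τs) • A) * Wd) *
        (⨆ i : Fin ηq, opInfNorm (C * NormedSpace.exp (((i : ℕ) * τs) • A))) / N * E := by
  set B := fun i : Fin ηq => C * NormedSpace.exp (((i : ℕ) * τs) • A)
  set S := ⨆ i, opInfNorm (B i)
  have hS : ∀ i, opInfNorm (B i) ≤ S := le_ciSup (Set.finite_range _).bddAbove
  have h_residual : ‖W *ᵥ e₀ - fun ij => q ij.1 ij.2‖ ≤ S * E / N := by
    rw [Matrix.mulVec_eq_of_stacked hW]
    refine norm_uncurry_le_of_forall_norm_le (f := fun i => B i *ᵥ e₀ - q i)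
      (by positivity [Real.iSup_nonneg fun i => opInfNorm_nonneg (B i)]) fun i => ?_
    rw [norm_sub_rev]
    exact (hq i).trans (by gcongr; exact hS i)
  calc _ = ‖(NormedSpace.exp (((ηq : ℝ) * τs) • A) * Wd) *ᵥ
          (W *ᵥ e₀ - fun ij => q ij.1 ij.2)‖ := by
        rw [Matrix.sub_mulVec_eq_mulVec_sub_of_mul_eq_one hWd, Matrix.mulVec_mulVec]
    _ ≤ opInfNorm (NormedSpace.exp (((ηq : ℝ) * τs) • A) * Wd) * (S * E / N) :=
        (norm_mulVec_le_opInfNorm_mul _ _).trans (by gcongr; exact opInfNorm_nonneg _)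
    _ = _ := by ring

/-- contraction of the estimation error over one quantization
cycle.  `W` stacks `C, Ce^{Aτs}, …, Ce^{A(η-1)τs}`, `W†` is a left inverse of
`W`, `y_i = Ce^{Aiτs} e₀` are the innovations and `q_i` their quantized values
with `|q_i - y_i|_∞ ≤ ‖Ce^{Aiτs}‖_∞ E / N`.  Then
`|e^{Aητs}(e₀ - W†q)|_∞ ≤ (‖e^{Aητs}W†‖_∞ · max_i ‖Ce^{Aiτs}‖_∞ / N) · E`.
(The norm `‖·‖` on vectors is the sup norm; `NormedSpace.exp ℝ` is the matrix
exponential.) -/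
theorem stmt_15 (n pd ηq : ℕ) (hηq : 1 ≤ ηq)
    (A : Matrix (Fin n) (Fin n) ℝ) (C : Matrix (Fin pd) (Fin n) ℝ)
    (τs : ℝ) (hτs : 0 < τs)
    (W : Matrix (Fin ηq × Fin pd) (Fin n) ℝ)
    (hW : ∀ (i : Fin ηq) (j : Fin pd) (l : Fin n),
      W (i, j) l = (C * NormedSpace.exp (((i : ℕ) * τs) • A)) j l)
    (Wd : Matrix (Fin n) (Fin ηq × Fin pd) ℝ) (hWd : Wd * W = 1)
    (N E : ℝ) (hN : 0 < N) (hE : 0 ≤ E)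
    (e₀ : Fin n → ℝ) (he₀ : ‖e₀‖ ≤ E)
    (q : Fin ηq → Fin pd → ℝ)
    (hq : ∀ i : Fin ηq,
      ‖q i - (C * NormedSpace.exp (((i : ℕ) * τs) • A)).mulVec e₀‖ ≤
        opInfNorm (C * NormedSpace.exp (((i : ℕ) * τs) • A)) * E / N) :
    ‖(NormedSpace.exp (((ηq : ℝ) * τs) • A)).mulVec
        (e₀ - Wd.mulVec (fun ij => q ij.1 ij.2))‖ ≤
      opInfNorm (NormedSpace.exp (((ηq : ℝ) * τs) • A) * Wd) *
        (⨆ i : Fin ηq, opInfNorm (C * NormedSpace.exp (((i : ℕ) * τs) • A))) / N * E :=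
  stmt_15_general n pd ηq A C τs W hW Wd hWd N E hN hE e₀ q hq
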